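/- arXiv:1111.4549 — 8 statements merged into one kernel-verified Lean document; each statement's English description precedes it below -/
import Mathlib

section
/- Let b : ℝ² → ℝ be continuously differentiable. Define a : ℝ² → ℝ² by a(x) := (∫₀¹ s · b(s x) ds) · (−x₂, x₁). Then a is differentiable on ℝ² and its curl equals b, i.e. ∂₁a₂(x) − ∂₂a₁(x) = b(x) for every x ∈ ℝ². -/
open MeasureTheory

/-! With `F x = ∫₀¹ s b(s x) ds` the gauge is `a = F • (-x₂, x₁)`, whose curl is
`DF(x) x + 2 F(x)` by the product rule. The substitution `u = s t` gives
`t² F(t x) = ∫₀ᵗ u b(u x) du`, and differentiating this at `t = 1` yields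
`DF(x) x + 2 F(x) = b(x)`. -/

open Filter Set Function intervalIntegral
open scoped Topology Interval

theorem hasFDerivAt_intervalIntegral_of_continuous_fderiv
    {H E : Type*} [NormedAddCommGroup H] [NormedSpace ℝ H] [NormedAddCommGroup E]
    [NormedSpace ℝ E] {f : H → ℝ → E} {f' : H → ℝ → H →L[ℝ] E}
    (hf : ∀ x t, HasFDerivAt (f · t) (f' x t) x) (hf_cont : ∀ x, Continuous (f x))
    (hf' : Continuous (uncurry f')) (a b : ℝ) (x₀ : H) :
    HasFDerivAt (fun x => ∫ t in a..b, f x t) (∫ t in a..b, f' x₀ t) x₀ := by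
  have hf'₀ : Continuous (f' x₀) := hf'.comp (Continuous.prodMk_right x₀)
  obtain ⟨C, hC⟩ := isCompact_uIcc.exists_bound_of_continuousOn hf'₀.continuousOn
  have h_near : ∀ᶠ x in 𝓝 x₀, ∀ t ∈ [[a, b]], ‖f' x t‖ ≤ C + 1 := by
    refine isCompact_uIcc.eventually_forall_of_forall_eventually fun t ht => ?_
    filter_upwards [hf'.continuousAt.norm.eventually (gt_mem_nhds (lt_add_one ‖f' x₀ t‖))]
      with z hz
    exact hz.le.trans (by linarith [hC t ht])
  refine hasFDerivAt_integral_of_dominated_of_fderiv_le (bound := fun _ => C + 1) h_near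
    (Eventually.of_forall fun x => (hf_cont x).aestronglyMeasurable)
    ((hf_cont x₀).intervalIntegrable a b) hf'₀.aestronglyMeasurable
    (Eventually.of_forall fun t ht x hx => hx t (uIoc_subset_uIcc ht)) intervalIntegrable_const
    (Eventually.of_forall fun t _ x _ => hf x t)

section RadialMoment

variable {E : Type*} [NormedAddCommGroup E] [NormedSpace ℝ E]

noncomputable def radialMoment (b : E → ℝ) (x : E) : ℝ :=
  ∫ s in (0 : ℝ)..1, s * b (s • x)

theorem hasFDerivAt_radialMoment {b : E → ℝ} (hb : ContDiff ℝ 1 b) (x : E) :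
    HasFDerivAt (radialMoment b) (∫ s in (0 : ℝ)..1, (s * s) • fderiv ℝ b (s • x)) x := by
  have hb' := hb.continuous_fderiv one_ne_zero
  refine hasFDerivAt_intervalIntegral_of_continuous_fderiv (f := fun y s => s * b (s • y))
    (f' := fun y s => (s * s) • fderiv ℝ b (s • y)) (fun y s => ?_)
    (fun y => by fun_prop) (by fun_prop) 0 1 x
  have := ((hb.differentiable one_ne_zero (s • y)).hasFDerivAt.comp y
    ((hasFDerivAt_id y).const_smul s)).const_mul s
  simpa [ContinuousLinearMap.comp_smul, smul_smul] using this

theorem sq_mul_radialMoment_smul {b : E → ℝ} (x : E) (t : ℝ) :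
    t ^ 2 * radialMoment b (t • x) = ∫ u in (0 : ℝ)..t, u * b (u • x) := by
  rcases eq_or_ne t 0 with rfl | ht
  · simp
  have hsub := integral_comp_mul_left (fun u => u * b (u • x)) ht (a := 0) (b := 1)
  simp only [mul_zero, mul_one, smul_eq_mul, mul_smul] at hsub
  have h_scaled : ∫ s in (0 : ℝ)..1, t * s * b (t • s • x) = t * radialMoment b (t • x) := by
    rw [radialMoment, ← intervalIntegral.integral_const_mul]
    congr 1 with s
    rw [smul_comm, mul_assoc]
  rw [sq, mul_assoc, ← h_scaled, hsub, ← mul_assoc, mul_inv_cancel₀ ht, one_mul]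

theorem HasFDerivAt.apply_self_add_two_mul_radialMoment_eq {b : E → ℝ} (hb : Continuous b)
    {x : E} {L : E →L[ℝ] ℝ} (hF : HasFDerivAt (radialMoment b) L x) :
    L x + 2 * radialMoment b x = b x := by
  have h_ray : HasDerivAt (fun t : ℝ => t • x) x 1 := by
    simpa using (hasDerivAt_id (1 : ℝ)).smul_const x
  have h_lhs : HasDerivAt (fun t : ℝ => t ^ 2 * radialMoment b (t • x))
      (2 * radialMoment b x + L x) 1 := by
    rw [← one_smul ℝ x] at hF
    simpa using (hasDerivAt_pow 2 (1 : ℝ)).fun_mul (hF.comp_hasDerivAt 1 h_ray)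
  have h_rhs : HasDerivAt (fun t : ℝ => ∫ u in (0 : ℝ)..t, u * b (u • x)) (b x) 1 := by
    simpa using ((by fun_prop : Continuous fun u : ℝ => u * b (u • x)).integral_hasStrictDerivAt
      0 1).hasDerivAt
  simp only [sq_mul_radialMoment_smul] at h_lhs
  linarith [h_lhs.unique h_rhs]

end RadialMoment

noncomputable def curl (a : ℝ × ℝ → ℝ × ℝ) (x : ℝ × ℝ) : ℝ :=
  fderiv ℝ (fun y => (a y).2) x (1, 0) - fderiv ℝ (fun y => (a y).1) x (0, 1)

theorem curl_smul_rotation {F : ℝ × ℝ → ℝ} {L : ℝ × ℝ →L[ℝ] ℝ} {x : ℝ × ℝ}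
    (hF : HasFDerivAt F L x) : curl (fun y => F y • (-y.2, y.1)) x = L x + 2 * F x := by
  have h₂ := hF.fun_mul hasFDerivAt_fst
  have h₁ := (hF.fun_mul hasFDerivAt_snd).fun_neg
  have hLx : L x = x.1 * L (1, 0) + x.2 * L (0, 1) := by
    conv_lhs => rw [show x = x.1 • ((1 : ℝ), (0 : ℝ)) + x.2 • (0, 1) by ext <;> simp]
    rw [map_add, map_smul, map_smul, smul_eq_mul, smul_eq_mul]
  simp only [curl, Prod.smul_mk, smul_eq_mul, mul_neg]
  rw [h₂.fderiv, h₁.fderiv]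
  simp only [add_apply, smul_apply, ContinuousLinearMap.coe_fst', neg_apply,
    ContinuousLinearMap.coe_snd', smul_eq_mul, mul_one, neg_add_rev]
  linarith

/-- The transversal (Poincaré) gauge `a(x) = (∫₀¹ s b(sx) ds) • (-x₂, x₁)` is a vector
potential for `b`: it is differentiable and `curl a = b`. -/
theorem stmt_2 (b : ℝ × ℝ → ℝ) (hb : ContDiff ℝ 1 b)
    (a : ℝ × ℝ → ℝ × ℝ)
    (ha : ∀ x : ℝ × ℝ, a x = (∫ s in (0:ℝ)..1, s * b (s • x)) • (-x.2, x.1)) :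
    Differentiable ℝ a ∧
    ∀ x : ℝ × ℝ,
      fderiv ℝ (fun y => (a y).2) x (1, 0) - fderiv ℝ (fun y => (a y).1) x (0, 1) = b x := by
  obtain rfl : a = fun y => radialMoment b y • (-y.2, y.1) := funext ha
  have hF := hasFDerivAt_radialMoment hb
  refine ⟨fun x => (hF x).differentiableAt.smul (by fun_prop), fun x => ?_⟩
  exact (curl_smul_rotation (hF x)).trans
    ((hF x).apply_self_add_two_mul_radialMoment_eq hb.continuous)
end

section
/- Fix real parameters B₀ > 0, B̃ > B₀ and 0 < q₂ < q₁ < 1. For j ∈ ℤ set m_j := (2j+1)/2; define r(j) := sqrt(4 B̃ m_j / ((q₁² − q₂²) B₀²)) if m_j ≥ 0 and r(j) := 0 if m_j < 0; and for r > 0 define ρ(r, j) := (q₂ B₀ / 4)(r² − r(j)²) if m_j ≥ 0 and r ≥ r(j), ρ(r, j) := q₂ B₀ r² / 4 if m_j < 0, and ρ(r, j) := 0 if m_j ≥ 0 and r < r(j). Then for all r > 0 and all j₁, j₂ ∈ ℤ, |ρ(r, j₁) − ρ(r, j₂)| ≤ (q₂ B̃ / ((q₁² − q₂²) B₀)) ·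 |j₁ − j₂|. -/
open MeasureTheory

/-- Lipschitz bound in the angular-momentum index for the Gaussian weight `ρ`:
`|ρ(r,j₁) - ρ(r,j₂)| ≤ (q₂ B̃ / ((q₁² - q₂²) B₀)) |j₁ - j₂|`. -/
theorem stmt_5 (B₀ Bt q₁ q₂ : ℝ) (hB₀ : 0 < B₀) (hBt : B₀ < Bt)
    (hq₂ : 0 < q₂) (hq₁₂ : q₂ < q₁) (hq₁ : q₁ < 1)
    (m : ℤ → ℝ) (hm : ∀ j : ℤ, m j = (2 * j + 1) / 2)
    (rr : ℤ → ℝ)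
    (hrr : ∀ j : ℤ, rr j =
      if 0 ≤ m j then Real.sqrt (4 * Bt * m j / ((q₁ ^ 2 - q₂ ^ 2) * B₀ ^ 2)) else 0)
    (ρ : ℝ → ℤ → ℝ)
    (hρ : ∀ r : ℝ, ∀ j : ℤ, ρ r j =
      if 0 ≤ m j then
        (if rr j ≤ r then q₂ * B₀ / 4 * (r ^ 2 - rr j ^ 2) else 0)
      else q₂ * B₀ * r ^ 2 / 4) :
    ∀ r > 0, ∀ j₁ j₂ : ℤ,
      |ρ r j₁ - ρ r j₂| ≤ q₂ * Bt / ((q₁ ^ 2 - q₂ ^ 2) * B₀) * |(j₁ : ℝ) - (j₂ : ℝ)| := by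
  intro r hr j₁ j₂
  have hq : 0 < q₁ ^ 2 - q₂ ^ 2 := by nlinarith
  have hBtpos : 0 < Bt := lt_trans hB₀ hBt
  set C : ℝ := 4 * Bt / ((q₁ ^ 2 - q₂ ^ 2) * B₀ ^ 2) with hCdef
  have hC : 0 < C := by
    apply div_pos (by positivity) (by positivity)
  -- closed form for ρ
  have key : ∀ j : ℤ, ρ r j = q₂ * B₀ / 4 * max (r ^ 2 - C * max (m j) 0) 0 := by
    intro j
    rw [hρ]
    by_cases h : 0 ≤ m j
    · have hrrj : rr j = Real.sqrt (C * m j) := by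
        rw [hrr, if_pos h, hCdef]; ring_nf
      have hCm : 0 ≤ C * m j := mul_nonneg hC.le h
      have hsq : rr j ^ 2 = C * m j := by
        rw [hrrj, Real.sq_sqrt hCm]
      have hmx : max (m j) 0 = m j := max_eq_left h
      rw [if_pos h, hmx]
      by_cases h2 : rr j ≤ r
      · have hnn : 0 ≤ r ^ 2 - rr j ^ 2 := by
          have : rr j ^ 2 ≤ r ^ 2 := by
            apply pow_le_pow_left₀ (by rw [hrrj]; exact Real.sqrt_nonneg _) h2
          linarith
        rw [if_pos h2, ← hsq, max_eq_left hnn]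
      · have hlt : r ^ 2 < rr j ^ 2 := by
          apply pow_lt_pow_left₀ (lt_of_not_ge h2) hr.le (by norm_num)
        rw [if_neg h2, ← hsq, max_eq_right (by linarith), mul_zero]
    · rw [if_neg h, max_eq_right (le_of_lt (lt_of_not_ge h)),
        mul_zero, sub_zero, max_eq_left (by positivity)]
      ring
  rw [key j₁, key j₂, ← mul_sub, abs_mul,
    abs_of_nonneg (by positivity : (0:ℝ) ≤ q₂ * B₀ / 4)]
  have step1 : |max (r ^ 2 - C * max (m j₁) 0) 0 - max (r ^ 2 - C * max (m j₂) 0) 0|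
      ≤ C * |max (m j₁) 0 - max (m j₂) 0| := by
    have h1 := abs_max_sub_max_le_abs (a := r ^ 2 - C * max (m j₁) 0)
      (b := r ^ 2 - C * max (m j₂) 0) (c := (0:ℝ))
    calc _ ≤ |(r ^ 2 - C * max (m j₁) 0) - (r ^ 2 - C * max (m j₂) 0)| := h1
      _ = C * |max (m j₁) 0 - max (m j₂) 0| := by
          rw [show (r ^ 2 - C * max (m j₁) 0) - (r ^ 2 - C * max (m j₂) 0)
              = -(C * (max (m j₁) 0 - max (m j₂) 0)) by ring, abs_neg, abs_mul,
            abs_of_pos hC]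
  have step2 : |max (m j₁) 0 - max (m j₂) 0| ≤ |m j₁ - m j₂| :=
    abs_max_sub_max_le_abs _ _ _
  have step3 : |m j₁ - m j₂| = |(j₁ : ℝ) - (j₂ : ℝ)| := by
    rw [hm, hm]; congr 1; ring
  have hconst : q₂ * B₀ / 4 * C = q₂ * Bt / ((q₁ ^ 2 - q₂ ^ 2) * B₀) := by
    rw [hCdef]; field_simp
  calc q₂ * B₀ / 4 * |max (r ^ 2 - C * max (m j₁) 0) 0 - max (r ^ 2 - C * max (m j₂) 0) 0|
      ≤ q₂ * B₀ / 4 * (C * |max (m j₁) 0 - max (m j₂) 0|) := by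
        apply mul_le_mul_of_nonneg_left step1 (by positivity)
    _ ≤ q₂ * B₀ / 4 * (C * |m j₁ - m j₂|) := by
        apply mul_le_mul_of_nonneg_left
          (mul_le_mul_of_nonneg_left step2 hC.le) (by positivity)
    _ = q₂ * Bt / ((q₁ ^ 2 - q₂ ^ 2) * B₀) * |(j₁ : ℝ) - (j₂ : ℝ)| := by
        rw [step3, ← mul_assoc, hconst]
end

section
/- Fix real parameters B₀ > 0, B̃ > B₀ and 0 < q₂ < q₁ < 1. For j ∈ ℤ set m_j := (2j+1)/2; define r(j) := sqrt(4 B̃ m_j / ((q₁² − q₂²) B₀²)) if m_j ≥ 0 and r(j) := 0 if m_j < 0; and for r > 0 define ρ(r, j) := (q₂ B₀ / 4)(r² − r(j)²) if m_j ≥ 0 and r ≥ r(j), ρ(r, j) := q₂ B₀ r² / 4 if m_j < 0, and ρ(r, j) := 0 if m_j ≥ 0 and r < r(j). For ε > 0 let ρ_ε := ρ / (1 + ε ρ). Then for all ε > 0, all r > 0 and all j₁, j₂ ∈ ℤ, |ρ_ε(r, j₁) − ρ_ε(r, j₂)| ≤ (q₂ B̃ / ((q₁² − q₂²) B₀)) ·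 |j₁ − j₂|. -/
open MeasureTheory

lemma frac_lip (ε x y : ℝ) (hε : 0 < ε) (hx : 0 ≤ x) (hy : 0 ≤ y) :
    |x / (1 + ε * x) - y / (1 + ε * y)| ≤ |x - y| := by
  have h1 : (0:ℝ) < 1 + ε * x := by positivity
  have h2 : (0:ℝ) < 1 + ε * y := by positivity
  rw [div_sub_div _ _ (ne_of_gt h1) (ne_of_gt h2)]
  have hxy : x * (1 + ε * y) - (1 + ε * x) * y = x - y := by ring
  rw [hxy, abs_div]
  have hd : (1:ℝ) ≤ |(1 + ε * x) * (1 + ε * y)| := by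
    rw [abs_of_pos (by positivity)]
    nlinarith [mul_nonneg (mul_nonneg hε.le hx) (mul_nonneg hε.le hy),
      mul_nonneg hε.le hx, mul_nonneg hε.le hy]
  calc |x - y| / |(1 + ε * x) * (1 + ε * y)| ≤ |x - y| / 1 :=
        div_le_div_of_nonneg_left (abs_nonneg _) one_pos hd
    _ = |x - y| := div_one _

lemma g_lip (A C m₁ m₂ : ℝ) (hA : 0 ≤ A) (hC : 0 ≤ C) :
    |(if 0 ≤ m₁ then max (A - C * m₁) 0 else A) -
      (if 0 ≤ m₂ then max (A - C * m₂) 0 else A)| ≤ C * |m₁ - m₂| := by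
  have key : ∀ a b : ℝ, 0 ≤ a → b < 0 →
      |max (A - C * a) 0 - A| ≤ C * |a - b| := by
    intro a b ha hb
    have h1 : max (A - C * a) 0 ≤ A := max_le (by nlinarith) hA
    have h2 : A - max (A - C * a) 0 ≤ C * a := by
      have := le_max_left (A - C * a) 0
      linarith
    rw [abs_sub_comm, abs_of_nonneg (by linarith), abs_of_pos (by linarith)]
    nlinarith
  by_cases h1 : 0 ≤ m₁ <;> by_cases h2 : 0 ≤ m₂ <;>
    simp only [h1, h2, if_true, if_false, if_pos, if_neg]
  · calc |max (A - C * m₁) 0 - max (A - C * m₂) 0| ≤ |(A - C * m₁) - (A - C * m₂)| :=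
          abs_max_sub_max_le_abs _ _ _
      _ = C * |m₁ - m₂| := by
          have h : (A - C * m₁) - (A - C * m₂) = C * (m₂ - m₁) := by ring
          rw [h, abs_mul, abs_of_nonneg hC, abs_sub_comm m₂]
  · exact key m₁ m₂ h1 (lt_of_not_ge h2)
  · rw [abs_sub_comm, abs_sub_comm m₁]; exact key m₂ m₁ h2 (lt_of_not_ge h1)
  · simpa using mul_nonneg hC (abs_nonneg (m₁ - m₂))

/-- Lipschitz bound in the angular-momentum index for the regularized Gaussian weight
`ρ_ε = ρ/(1+ερ)`: `|ρ_ε(r,j₁) - ρ_ε(r,j₂)| ≤ (q₂ B̃ / ((q₁² - q₂²) B₀)) |j₁ - j₂|`. -/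
theorem stmt_6 (B₀ Bt q₁ q₂ : ℝ) (hB₀ : 0 < B₀) (hBt : B₀ < Bt)
    (hq₂ : 0 < q₂) (hq₁₂ : q₂ < q₁) (hq₁ : q₁ < 1)
    (m : ℤ → ℝ) (hm : ∀ j : ℤ, m j = (2 * j + 1) / 2)
    (rr : ℤ → ℝ)
    (hrr : ∀ j : ℤ, rr j =
      if 0 ≤ m j then Real.sqrt (4 * Bt * m j / ((q₁ ^ 2 - q₂ ^ 2) * B₀ ^ 2)) else 0)
    (ρ : ℝ → ℤ → ℝ)
    (hρ : ∀ r : ℝ, ∀ j : ℤ, ρ r j =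
      if 0 ≤ m j then
        (if rr j ≤ r then q₂ * B₀ / 4 * (r ^ 2 - rr j ^ 2) else 0)
      else q₂ * B₀ * r ^ 2 / 4)
    (ρε : ℝ → ℝ → ℤ → ℝ)
    (hρε : ∀ ε r : ℝ, ∀ j : ℤ, ρε ε r j = ρ r j / (1 + ε * ρ r j)) :
    ∀ ε > 0, ∀ r > 0, ∀ j₁ j₂ : ℤ,
      |ρε ε r j₁ - ρε ε r j₂| ≤ q₂ * Bt / ((q₁ ^ 2 - q₂ ^ 2) * B₀) * |(j₁ : ℝ) - (j₂ : ℝ)| := by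
  intro ε hε r hr j₁ j₂
  have hq : 0 < q₁ ^ 2 - q₂ ^ 2 := by nlinarith
  have hBt0 : 0 < Bt := lt_trans hB₀ hBt
  set C : ℝ := q₂ * Bt / ((q₁ ^ 2 - q₂ ^ 2) * B₀) with hC
  have hCpos : 0 < C := by positivity
  set A : ℝ := q₂ * B₀ * r ^ 2 / 4 with hA
  have hA0 : 0 ≤ A := by positivity
  -- closed form for ρ
  have hρ' : ∀ j : ℤ, ρ r j = if 0 ≤ m j then max (A - C * m j) 0 else A := by
    intro j
    rw [hρ]
    by_cases hj : 0 ≤ m j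
    · rw [if_pos hj, if_pos hj, hrr, if_pos hj]
      have harg : 0 ≤ 4 * Bt * m j / ((q₁ ^ 2 - q₂ ^ 2) * B₀ ^ 2) := by positivity
      have hsq : Real.sqrt (4 * Bt * m j / ((q₁ ^ 2 - q₂ ^ 2) * B₀ ^ 2)) ^ 2 =
          4 * Bt * m j / ((q₁ ^ 2 - q₂ ^ 2) * B₀ ^ 2) := Real.sq_sqrt harg
      have heq : q₂ * B₀ / 4 * (r ^ 2 - 4 * Bt * m j / ((q₁ ^ 2 - q₂ ^ 2) * B₀ ^ 2)) =
          A - C * m j := by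
        rw [hA, hC]; field_simp
      by_cases hle : Real.sqrt (4 * Bt * m j / ((q₁ ^ 2 - q₂ ^ 2) * B₀ ^ 2)) ≤ r
      · rw [if_pos hle, hsq, heq]
        have h2 : Real.sqrt (4 * Bt * m j / ((q₁ ^ 2 - q₂ ^ 2) * B₀ ^ 2)) ^ 2 ≤ r ^ 2 :=
          pow_le_pow_left₀ (Real.sqrt_nonneg _) hle 2
        rw [hsq] at h2
        rw [max_eq_left]
        rw [← heq]
        exact mul_nonneg (by positivity) (by linarith)
      · rw [if_neg hle]
        push_neg at hle
        have h2 : r ^ 2 < Real.sqrt (4 * Bt * m j / ((q₁ ^ 2 - q₂ ^ 2) * B₀ ^ 2)) ^ 2 :=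
          pow_lt_pow_left₀ hle (le_of_lt hr) (by norm_num)
        rw [hsq] at h2
        have : A - C * m j < 0 := by
          rw [← heq]
          exact mul_neg_of_pos_of_neg (by positivity) (by linarith)
        rw [max_eq_right (le_of_lt this)]
    · rw [if_neg hj, if_neg hj]
  have hρnn : ∀ j : ℤ, 0 ≤ ρ r j := by
    intro j; rw [hρ']; split
    · exact le_max_right _ _
    · exact hA0
  have step1 : |ρε ε r j₁ - ρε ε r j₂| ≤ |ρ r j₁ - ρ r j₂| := by
    rw [hρε, hρε]
    exact frac_lip ε _ _ hε (hρnn j₁) (hρnn j₂)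
  have step2 : |ρ r j₁ - ρ r j₂| ≤ C * |m j₁ - m j₂| := by
    rw [hρ' j₁, hρ' j₂]
    exact g_lip A C (m j₁) (m j₂) hA0 (le_of_lt hCpos)
  have hmm : |m j₁ - m j₂| = |(j₁ : ℝ) - (j₂ : ℝ)| := by
    rw [hm, hm]
    congr 1; ring
  calc |ρε ε r j₁ - ρε ε r j₂| ≤ C * |m j₁ - m j₂| := le_trans step1 step2
    _ = C * |(j₁ : ℝ) - (j₂ : ℝ)| := by rw [hmm]
end

section
/- Let h : ℝ² → ℝ be twice continuously differentiable and let ω : ℂ → ℂ be entire (holomorphic on all of ℂ). Define A₁ := −∂₂h, A₂ := ∂₁h, and ψ(x₁, x₂) := ω(x₁ + i x₂) · e^{−h(x₁, x₂)}. Then ψ satisfies the zero-mode equation (−i∂₁ψ − A₁ψ) + i(−i∂₂ψ − A₂ψ) = 0 everywhere on ℝ². -/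
/-!
With `∂̄ = ∂₁ + i∂₂` and `A₁ + iA₂ = i ∂̄h`, the left-hand side of the zero-mode equation is
`-i (∂̄ψ + (∂̄h) ψ)`. By the Leibniz rule and the Cauchy–Riemann equations
`∂̄ (ω (x₁ + i x₂)) = 0`, we get `∂̄ψ = ω · ∂̄(e^{-h}) = -(∂̄h) ψ`.
-/

open Complex

/-- `∂₁ + i∂₂`, twice the Wirtinger derivative `∂/∂z̄`. -/
noncomputable def dbar (f : ℝ × ℝ → ℂ) (x : ℝ × ℝ) : ℂ :=
  fderiv ℝ f x (1, 0) + I * fderiv ℝ f x (0, 1)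

section

variable {f g : ℝ × ℝ → ℂ} {x : ℝ × ℝ}

theorem dbar_mul (hf : DifferentiableAt ℝ f x) (hg : DifferentiableAt ℝ g x) :
    dbar (fun y => f y * g y) x = dbar f x * g x + f x * dbar g x := by
  simp only [dbar, fderiv_fun_mul hf hg, add_apply, smul_apply, smul_eq_mul]
  ring

theorem dbar_neg : dbar (fun y => -f y) x = -dbar f x := by
  simp only [dbar, fderiv_fun_neg, neg_apply]
  ring

theorem dbar_cexp (hf : DifferentiableAt ℝ f x) :
    dbar (fun y => exp (f y)) x = exp (f x) * dbar f x := by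
  simp only [dbar, hf.hasFDerivAt.cexp.fderiv, smul_apply, smul_eq_mul]
  ring

theorem dbar_ofReal_comp {h : ℝ × ℝ → ℝ} (hh : DifferentiableAt ℝ h x) :
    dbar (fun y => (h y : ℂ)) x = fderiv ℝ h x (1, 0) + I * fderiv ℝ h x (0, 1) := by
  have hd : HasFDerivAt (fun y => (h y : ℂ)) (ofRealCLM.comp (fderiv ℝ h x)) x :=
    ofRealCLM.hasFDerivAt.comp x hh.hasFDerivAt
  simp [dbar, hd.fderiv]

theorem dbar_comp_equivRealProdCLM_symm {ω : ℂ → ℂ}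
    (hω : DifferentiableAt ℂ ω (equivRealProdCLM.symm x)) :
    dbar (fun y => ω (equivRealProdCLM.symm y)) x = 0 := by
  have hd : HasFDerivAt (fun y => ω (equivRealProdCLM.symm y))
      ((fderiv ℂ ω (equivRealProdCLM.symm x)).restrictScalars ℝ ∘L
        (equivRealProdCLM.symm : ℝ × ℝ →L[ℝ] ℂ)) x :=
    (hω.hasFDerivAt.restrictScalars ℝ).comp x equivRealProdCLM.symm.hasFDerivAt
  rw [dbar, hd.fderiv]
  simp [equivRealProdCLM_symm_apply, ← mul_assoc]

end

/-- Aharonov–Casher zero modes: for `A = (-∂₂h, ∂₁h)` and `ω` entire, the function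
`ψ(x) = ω(x₁ + ix₂) e^{-h(x)}` satisfies `(p₁ - A₁)ψ + i(p₂ - A₂)ψ = 0`. -/
theorem stmt_10 (h : ℝ × ℝ → ℝ) (hh : ContDiff ℝ 2 h)
    (ω : ℂ → ℂ) (hω : Differentiable ℂ ω)
    (A₁ A₂ : ℝ × ℝ → ℝ)
    (hA₁ : ∀ x : ℝ × ℝ, A₁ x = -(fderiv ℝ h x (0, 1)))
    (hA₂ : ∀ x : ℝ × ℝ, A₂ x = fderiv ℝ h x (1, 0))
    (ψ : ℝ × ℝ → ℂ)
    (hψ : ∀ x : ℝ × ℝ, ψ x = ω ((x.1 : ℂ) + Complex.I * (x.2 : ℂ)) *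
      Complex.exp (-(h x : ℂ))) :
    ∀ x : ℝ × ℝ,
      (-Complex.I * fderiv ℝ ψ x (1, 0) - (A₁ x : ℂ) * ψ x)
        + Complex.I * (-Complex.I * fderiv ℝ ψ x (0, 1) - (A₂ x : ℂ) * ψ x) = 0 := by
  intro x
  have hψ_eq : ψ = fun y => ω (equivRealProdCLM.symm y) * exp (-(h y : ℂ)) := by
    funext y
    rw [hψ, equivRealProdCLM_symm_apply, mul_comm (y.2 : ℂ)]
  have hhx : DifferentiableAt ℝ h x := hh.differentiable (by norm_num) x
  have hωx : DifferentiableAt ℝ (fun y => ω (equivRealProdCLM.symm y)) x :=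
    ((hω _).restrictScalars ℝ).comp x equivRealProdCLM.symm.differentiableAt
  have hdbar : dbar ψ x = -(fderiv ℝ h x (1, 0) + I * fderiv ℝ h x (0, 1)) * ψ x := by
    rw [hψ_eq, dbar_mul hωx (by fun_prop), dbar_comp_equivRealProdCLM_symm (hω _),
      dbar_cexp (by fun_prop), dbar_neg, dbar_ofReal_comp hhx]
    ring
  rw [dbar] at hdbar
  rw [hA₁, hA₂]
  push_cast
  linear_combination (-I) * hdbar + fderiv ℝ h x (0, 1) * ψ x * I_sq
end

section
/- Let B₀ > 0 and let S ⊆ [0, ∞) be a nonempty set of real numbers satisfying S \ {0} = {s + 2B₀ : s ∈ S}. Then S = {2B₀ n : n ∈ ℕ}, where ℕ includes 0. In particular 0 ∈ S. -/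
/-- The ladder argument: a nonempty set `S ⊆ [0,∞)` with `S \ {0} = S + 2B₀` is exactly
the set of nonnegative integer multiples of `2B₀`; in particular `0 ∈ S`. -/
theorem stmt_11 (B₀ : ℝ) (hB₀ : 0 < B₀) (S : Set ℝ) (hS : S.Nonempty)
    (hsub : S ⊆ Set.Ici 0)
    (hladder : S \ {0} = (fun s => s + 2 * B₀) '' S) :
    S = {x : ℝ | ∃ n : ℕ, x = 2 * B₀ * n} ∧ (0 : ℝ) ∈ S := by
  -- descending lemma
  have key : ∀ n : ℕ, ∀ s ∈ S, s ≤ 2 * B₀ * n → (∃ m : ℕ, s = 2 * B₀ * m) ∧ (0:ℝ) ∈ S := by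
    intro n
    induction n with
    | zero =>
      intro s hs hle
      have h0 : s = 0 := le_antisymm (by simpa using hle) (hsub hs)
      exact ⟨⟨0, by simp [h0]⟩, h0 ▸ hs⟩
    | succ n ih =>
      intro s hs hle
      by_cases h0 : s = 0
      · exact ⟨⟨0, by simp [h0]⟩, h0 ▸ hs⟩
      · have hmem : s ∈ S \ {0} := ⟨hs, h0⟩
        rw [hladder] at hmem
        obtain ⟨t, ht, hts⟩ := hmem
        have hts' : t + 2 * B₀ = s := hts
        have htle : t ≤ 2 * B₀ * n := by
          push_cast at hle ⊢
          linarith [hts']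
        obtain ⟨⟨m, hm⟩, h0S⟩ := ih t ht htle
        exact ⟨⟨m + 1, by push_cast; linarith [hts', hm]⟩, h0S⟩
  -- 0 ∈ S
  obtain ⟨s, hs⟩ := hS
  obtain ⟨n, hn⟩ := exists_nat_ge (s / (2 * B₀))
  have h2B : 0 < 2 * B₀ := by linarith
  have hsle : s ≤ 2 * B₀ * n := by
    rw [div_le_iff₀ h2B] at hn; linarith [hn]
  have h0S : (0:ℝ) ∈ S := (key n s hs hsle).2
  -- ascending: all multiples in S
  have up : ∀ m : ℕ, (2 * B₀ * m : ℝ) ∈ S := by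
    intro m
    induction m with
    | zero => simpa using h0S
    | succ m ih =>
      have : (2 * B₀ * m + 2 * B₀ : ℝ) ∈ S \ {0} := by
        rw [hladder]; exact ⟨_, ih, rfl⟩
      have := this.1
      convert this using 1
      push_cast; ring
  refine ⟨Set.ext fun x => ⟨?_, ?_⟩, h0S⟩
  · intro hx
    obtain ⟨m, hn'⟩ := exists_nat_ge (x / (2 * B₀))
    have hxle : x ≤ 2 * B₀ * m := by
      rw [div_le_iff₀ h2B] at hn'; linarith [hn']
    exact (key m x hx hxle).1
  · rintro ⟨m, rfl⟩
    exact up m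
end

section
/- Let V : (0, ∞) → ℝ be continuous, let φ : (0, ∞) → ℝ be continuously differentiable, and let g : (0, ∞) → ℂ² be smooth and compactly supported in (0, ∞). Define (K₀ h)(r) := −i σ₂ h′(r) + V(r) σ₁ h(r) for ℂ²-valued h, where σ₁ = [[0,1],[1,0]] and σ₂ = [[0,−i],[i,0]]. Then Re ∫₀^∞ ⟨ K₀(e^{φ} g)(r), K₀(e^{−φ} g)(r) ⟩_{ℂ²} dr = ∫₀^∞ ‖(K₀ g)(r)‖²_{ℂ²} dr − ∫₀^∞ φ′(r)² ‖g(r)‖²_{ℂ²} dr. -/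
open MeasureTheory

lemma aux_integrable_stmt14 {E : Type*} [NormedAddCommGroup E] (u : ℝ → E)
    (hc : ContinuousOn u (Set.Ioi 0)) (K : Set ℝ) (hKc : IsCompact K)
    (hKs : K ⊆ Set.Ioi 0) (hu0 : ∀ r ∉ K, u r = 0) :
    IntegrableOn u (Set.Ioi 0) := by
  have hcont : Continuous u := by
    rw [continuous_iff_continuousAt]
    intro r
    by_cases hr : r ∈ Set.Ioi (0:ℝ)
    · exact hc.continuousAt (isOpen_Ioi.mem_nhds hr)
    · have hrK : r ∉ K := fun h => hr (hKs h)
      have : u =ᶠ[nhds r] fun _ => 0 :=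
        Filter.eventually_of_mem (hKc.isClosed.isOpen_compl.mem_nhds hrK)
          (fun t ht => hu0 t ht)
      exact this.continuousAt
  exact (hcont.integrable_of_hasCompactSupport
    (HasCompactSupport.intro hKc hu0)).integrableOn

/-- The Agmon identity for the radial Dirac operator `K₀ h = -iσ₂ h' + V σ₁ h`:
`Re ∫ ⟨K₀(e^φ g), K₀(e^{-φ} g)⟩ = ∫ ‖K₀ g‖² - ∫ φ'² ‖g‖²`.  Here `ℂ²`-valued functions
are represented as pairs, `(K₀ h)(r) = (-h₂'(r) + V(r) h₂(r), h₁'(r) + V(r) h₁(r))`,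
the inner product is `⟨u,v⟩ = conj u₁ v₁ + conj u₂ v₂` and `‖u‖² = ‖u₁‖² + ‖u₂‖²`. -/
theorem stmt_14 (V : ℝ → ℝ) (hV : ContinuousOn V (Set.Ioi 0))
    (φ : ℝ → ℝ) (hφ : ContDiffOn ℝ 1 φ (Set.Ioi 0))
    (g : ℝ → ℂ × ℂ) (hg : ContDiff ℝ (⊤ : ℕ∞) g) (hgc : HasCompactSupport g)
    (hgs : tsupport g ⊆ Set.Ioi 0)
    (K₀ : (ℝ → ℂ × ℂ) → (ℝ → ℂ × ℂ))
    (hK : ∀ h : ℝ → ℂ × ℂ, ∀ r : ℝ, K₀ h r =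
      (-(deriv (fun t => (h t).2) r) + (V r : ℂ) * (h r).2,
        deriv (fun t => (h t).1) r + (V r : ℂ) * (h r).1)) :
    (∫ r in Set.Ioi (0:ℝ),
        ((starRingEnd ℂ) ((K₀ (fun t => (Real.exp (φ t) : ℂ) • g t) r).1) *
            (K₀ (fun t => (Real.exp (-φ t) : ℂ) • g t) r).1
          + (starRingEnd ℂ) ((K₀ (fun t => (Real.exp (φ t) : ℂ) • g t) r).2) *
            (K₀ (fun t => (Real.exp (-φ t) : ℂ) • g t) r).2)).re
      = (∫ r in Set.Ioi (0:ℝ), (‖(K₀ g r).1‖ ^ 2 + ‖(K₀ g r).2‖ ^ 2))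
        - ∫ r in Set.Ioi (0:ℝ), (deriv φ r) ^ 2 * (‖(g r).1‖ ^ 2 + ‖(g r).2‖ ^ 2) := by
  -- abbreviations
  have hg1 : ContDiff ℝ (⊤ : ℕ∞) (fun t => (g t).1) := (ContDiff.fst hg)
  have hg2 : ContDiff ℝ (⊤ : ℕ∞) (fun t => (g t).2) := (ContDiff.snd hg)
  have hdg1 : Continuous (deriv fun t => (g t).1) := hg1.continuous_deriv (by simp)
  have hdg2 : Continuous (deriv fun t => (g t).2) := hg2.continuous_deriv (by simp)
  have hp : ContinuousOn (deriv φ) (Set.Ioi 0) :=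
    hφ.continuousOn_deriv_of_isOpen isOpen_Ioi le_rfl
  set g1 : ℝ → ℂ := fun t => (g t).1 with hg1def
  set g2 : ℝ → ℂ := fun t => (g t).2 with hg2def
  set p : ℝ → ℝ := deriv φ with hpdef
  set a1 : ℝ → ℂ := fun r => -(deriv g2 r) + (V r : ℂ) * g2 r with ha1def
  set a2 : ℝ → ℂ := fun r => deriv g1 r + (V r : ℂ) * g1 r with ha2def
  set hplus : ℝ → ℂ × ℂ := fun t => (Real.exp (φ t) : ℂ) • g t with hplusdef
  set hminus : ℝ → ℂ × ℂ := fun t => (Real.exp (-φ t) : ℂ) • g t with hminusdef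
  set f : ℝ → ℂ := fun r =>
      (starRingEnd ℂ) ((K₀ hplus r).1) * (K₀ hminus r).1
        + (starRingEnd ℂ) ((K₀ hplus r).2) * (K₀ hminus r).2 with hfdef
  set E : ℝ → ℂ := fun r =>
      ((starRingEnd ℂ) (a1 r) - (p r : ℂ) * (starRingEnd ℂ) (g2 r)) * (a1 r + (p r : ℂ) * g2 r)
        + ((starRingEnd ℂ) (a2 r) + (p r : ℂ) * (starRingEnd ℂ) (g1 r)) * (a2 r - (p r : ℂ) * g1 r)
    with hEdef
  -- component functions of hplus/hminus
  have hplus1 : (fun t => (hplus t).1) = fun t => (Real.exp (φ t) : ℂ) * g1 t := by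
    funext t; simp [hplusdef, g1]
  have hplus2 : (fun t => (hplus t).2) = fun t => (Real.exp (φ t) : ℂ) * g2 t := by
    funext t; simp [hplusdef, g2]
  have hminus1 : (fun t => (hminus t).1) = fun t => (Real.exp (-φ t) : ℂ) * g1 t := by
    funext t; simp [hminusdef, g1]
  have hminus2 : (fun t => (hminus t).2) = fun t => (Real.exp (-φ t) : ℂ) * g2 t := by
    funext t; simp [hminusdef, g2]
  -- key pointwise identity on Ioi 0
  have key1 : ∀ r ∈ Set.Ioi (0:ℝ), f r = E r := by
    intro r hr
    have hφr : HasDerivAt φ (p r) r :=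
      ((hφ.differentiableOn one_ne_zero).differentiableAt
        (isOpen_Ioi.mem_nhds hr)).hasDerivAt
    have hEp : HasDerivAt (fun t => (Real.exp (φ t) : ℂ))
        ((Real.exp (φ r) * p r : ℝ) : ℂ) r := (hφr.exp).ofReal_comp
    have hEm : HasDerivAt (fun t => (Real.exp (-φ t) : ℂ))
        ((Real.exp (-φ r) * (-p r) : ℝ) : ℂ) r := ((hφr.neg).exp).ofReal_comp
    have hd1 : HasDerivAt g1 (deriv g1 r) r :=
      ((hg1.differentiable (by simp)) r).hasDerivAt
    have hd2 : HasDerivAt g2 (deriv g2 r) r :=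
      ((hg2.differentiable (by simp)) r).hasDerivAt
    have dp1 : deriv (fun t => (hplus t).1)  r
        = ((Real.exp (φ r) * p r : ℝ) : ℂ) * g1 r + (Real.exp (φ r) : ℂ) * deriv g1 r := by
      rw [hplus1]; exact (hEp.mul hd1).deriv
    have dp2 : deriv (fun t => (hplus t).2) r
        = ((Real.exp (φ r) * p r : ℝ) : ℂ) * g2 r + (Real.exp (φ r) : ℂ) * deriv g2 r := by
      rw [hplus2]; exact (hEp.mul hd2).deriv
    have dm1 : deriv (fun t => (hminus t).1) r
        = ((Real.exp (-φ r) * (-p r) : ℝ) : ℂ) * g1 r + (Real.exp (-φ r) : ℂ) * deriv g1 r := by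
      rw [hminus1]; exact (hEm.mul hd1).deriv
    have dm2 : deriv (fun t => (hminus t).2) r
        = ((Real.exp (-φ r) * (-p r) : ℝ) : ℂ) * g2 r + (Real.exp (-φ r) : ℂ) * deriv g2 r := by
      rw [hminus2]; exact (hEm.mul hd2).deriv
    have hK1 := hK hplus r
    have hK2 := hK hminus r
    have hne : ((Real.exp (φ r) : ℝ) : ℂ) ≠ 0 := by
      exact_mod_cast Real.exp_ne_zero (φ r)
    have hexpneg : ((Real.exp (-φ r) : ℝ) : ℂ) = ((Real.exp (φ r) : ℝ) : ℂ)⁻¹ := by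
      rw [Real.exp_neg]; push_cast; ring
    simp only [hfdef, hEdef, hK1, hK2, dp1, dp2, dm1, dm2, ha1def, ha2def]
    simp only [hplusdef, hminusdef, Prod.smul_fst, Prod.smul_snd, smul_eq_mul]
    simp only [map_add, map_mul, map_neg, map_sub, Complex.conj_ofReal,
      Complex.ofReal_mul, Complex.ofReal_neg, hexpneg]
    field_simp
    ring
  -- real part identity (everywhere)
  have key2 : ∀ r : ℝ, (E r).re
      = (‖(K₀ g r).1‖ ^ 2 + ‖(K₀ g r).2‖ ^ 2) - p r ^ 2 * (‖g1 r‖ ^ 2 + ‖g2 r‖ ^ 2) := by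
    intro r
    have hKg := hK g r
    rw [hKg]
    simp only [hEdef, ha1def, ha2def, Complex.sq_norm,
      Complex.normSq_apply]
    simp only [Complex.add_re, Complex.add_im, Complex.sub_re, Complex.sub_im,
      Complex.mul_re, Complex.mul_im, Complex.neg_re, Complex.neg_im,
      Complex.conj_re, Complex.conj_im, Complex.ofReal_re, Complex.ofReal_im]
    ring
  set F : ℝ → ℝ := fun r => ‖(K₀ g r).1‖ ^ 2 + ‖(K₀ g r).2‖ ^ 2 with hFdef
  set G : ℝ → ℝ := fun r => p r ^ 2 * (‖g1 r‖ ^ 2 + ‖g2 r‖ ^ 2) with hGdef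
  have hFa : ∀ r, F r = ‖a1 r‖ ^ 2 + ‖a2 r‖ ^ 2 := fun r => by
    simp only [hFdef, hK g r, ha1def, ha2def]
    rfl
  -- vanishing off the support of g
  have hev : ∀ r ∉ tsupport g, g =ᶠ[nhds r] 0 := fun r hr =>
    notMem_tsupport_iff_eventuallyEq.mp hr
  have hg10 : ∀ r ∉ tsupport g, (fun t => g1 t) =ᶠ[nhds r] fun _ => 0 := by
    intro r hr; filter_upwards [hev r hr] with t ht; simp [hg1def, ht]
  have hg20 : ∀ r ∉ tsupport g, (fun t => g2 t) =ᶠ[nhds r] fun _ => 0 := by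
    intro r hr; filter_upwards [hev r hr] with t ht; simp [hg2def, ht]
  have hmul0 : ∀ (r : ℝ) (c u : ℝ → ℂ), ((fun t => u t) =ᶠ[nhds r] fun _ => 0) →
      deriv (fun t => c t * u t) r = 0 := by
    intro r c u hu
    have h0 : (fun t => c t * u t) =ᶠ[nhds r] fun _ => 0 := by
      filter_upwards [hu] with t ht; simp [ht]
    rw [h0.deriv_eq, deriv_const]
  have hf0 : ∀ r ∉ tsupport g, f r = 0 := by
    intro r hr
    have hgr : g r = 0 := image_eq_zero_of_notMem_tsupport hr
    have d1p : deriv (fun t => (hplus t).1) r = 0 := by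
      rw [hplus1]; exact hmul0 r _ _ (hg10 r hr)
    have d2p : deriv (fun t => (hplus t).2) r = 0 := by
      rw [hplus2]; exact hmul0 r _ _ (hg20 r hr)
    have d1m : deriv (fun t => (hminus t).1) r = 0 := by
      rw [hminus1]; exact hmul0 r _ _ (hg10 r hr)
    have d2m : deriv (fun t => (hminus t).2) r = 0 := by
      rw [hminus2]; exact hmul0 r _ _ (hg20 r hr)
    have hpr : hplus r = 0 := by rw [hplusdef]; simp [hgr]
    have hmr : hminus r = 0 := by rw [hminusdef]; simp [hgr]
    simp [hfdef, hK hplus r, hK hminus r, d1p, d2p, d1m, d2m, hpr, hmr]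
  have hF0 : ∀ r ∉ tsupport g, F r = 0 := by
    intro r hr
    have hgr : g r = 0 := image_eq_zero_of_notMem_tsupport hr
    have d1 : deriv g1 r = 0 := by
      have := hmul0 r (fun _ => 1) g1 (hg10 r hr); simpa using this
    have d2 : deriv g2 r = 0 := by
      have := hmul0 r (fun _ => 1) g2 (hg20 r hr); simpa using this
    rw [hg1def] at d1; rw [hg2def] at d2
    simp [hFa r, ha1def, ha2def, d1, d2, hg1def, hg2def, hgr]
  have hG0 : ∀ r ∉ tsupport g, G r = 0 := by
    intro r hr
    have hgr : g r = 0 := image_eq_zero_of_notMem_tsupport hr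
    simp [hGdef, hg1def, hg2def, hgr]
  -- continuity on Ioi 0
  have hg1c : ContinuousOn g1 (Set.Ioi 0) := (hg1.continuous).continuousOn
  have hg2c : ContinuousOn g2 (Set.Ioi 0) := (hg2.continuous).continuousOn
  have hVc : ContinuousOn (fun r => ((V r : ℝ) : ℂ)) (Set.Ioi 0) :=
    Complex.continuous_ofReal.comp_continuousOn hV
  have ha1c : ContinuousOn a1 (Set.Ioi 0) := by
    rw [ha1def]; exact (hdg2.continuousOn.neg).add (hVc.mul hg2c)
  have ha2c : ContinuousOn a2 (Set.Ioi 0) := by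
    rw [ha2def]; exact hdg1.continuousOn.add (hVc.mul hg1c)
  have hpc : ContinuousOn (fun r => ((p r : ℝ) : ℂ)) (Set.Ioi 0) :=
    Complex.continuous_ofReal.comp_continuousOn hp
  have hconj : ∀ (u : ℝ → ℂ), ContinuousOn u (Set.Ioi 0) →
      ContinuousOn (fun r => (starRingEnd ℂ) (u r)) (Set.Ioi 0) := fun u hu =>
    Complex.continuous_conj.comp_continuousOn hu
  have hEc : ContinuousOn E (Set.Ioi 0) := by
    rw [hEdef]
    exact (((hconj a1 ha1c).sub (hpc.mul (hconj g2 hg2c))).mul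
        (ha1c.add (hpc.mul hg2c))).add
      (((hconj a2 ha2c).add (hpc.mul (hconj g1 hg1c))).mul
        (ha2c.sub (hpc.mul hg1c)))
  have hfc : ContinuousOn f (Set.Ioi 0) := hEc.congr key1
  have hFc : ContinuousOn F (Set.Ioi 0) := by
    have : ContinuousOn (fun r => ‖a1 r‖ ^ 2 + ‖a2 r‖ ^ 2) (Set.Ioi 0) :=
      ((ha1c.norm.pow 2)).add ((ha2c.norm.pow 2))
    exact this.congr fun r _ => hFa r
  have hGc : ContinuousOn G (Set.Ioi 0) := by
    rw [hGdef]
    exact (hp.pow 2).mul (((hg1c.norm.pow 2)).add ((hg2c.norm.pow 2)))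
  -- integrability
  have hfint : IntegrableOn f (Set.Ioi 0) :=
    aux_integrable_stmt14 f hfc (tsupport g) hgc hgs hf0
  have hFint : IntegrableOn F (Set.Ioi 0) :=
    aux_integrable_stmt14 F hFc (tsupport g) hgc hgs hF0
  have hGint : IntegrableOn G (Set.Ioi 0) :=
    aux_integrable_stmt14 G hGc (tsupport g) hgc hgs hG0
  -- assemble
  show (∫ r in Set.Ioi (0:ℝ), f r).re
      = (∫ r in Set.Ioi (0:ℝ), F r) - ∫ r in Set.Ioi (0:ℝ), G r
  have h1 : (∫ r in Set.Ioi (0:ℝ), f r).re = ∫ r in Set.Ioi (0:ℝ), (f r).re := by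
    have := integral_re (μ := volume.restrict (Set.Ioi 0)) hfint
    simpa [RCLike.re_to_complex] using this.symm
  rw [h1,
    setIntegral_congr_fun measurableSet_Ioi
      (fun r hr => by show (f r).re = F r - G r; rw [key1 r hr, key2 r] : Set.EqOn (fun r => (f r).re)
        (fun r => F r - G r) (Set.Ioi 0)),
    integral_sub hFint hGint]
end

section
/- Fix real parameters B₀ > 0, B̃ > B₀ and 0 < q₂ < q₁ < 1. For j ∈ ℤ set m_j := (2j+1)/2; define r(j) := sqrt(4 B̃ m_j / ((q₁² − q₂²) B₀²)) if m_j ≥ 0 and r(j) := 0 if m_j < 0; and for r > 0 define ρ(r, j) := (q₂ B₀ / 4)(r² − r(j)²) if m_j ≥ 0 and r ≥ r(j), ρ(r, j) := q₂ B₀ r² / 4 if m_j < 0, and ρ(r, j) := 0 if m_j ≥ 0 and r < r(j). Let δ ∈ (0, 1), M > 1, and set α := δ q₂ (1 − 1/M). Let F : (0, ∞) × ℤ → [0, ∞) be measurable such that Σ_{j ∈ ℤ} ∫₀^∞ e^{2δρ(r,j)} F(r, j) dr < ∞ and, for every γ > 0, Σ_{j ∈ ℤ} ∫₀^∞ e^{2γ|m_j|}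 F(r, j) dr < ∞. Then Σ_{j ∈ ℤ} ∫₀^∞ e^{α B₀ r² / 2} F(r, j) dr < ∞. -/
/-!
Split the half-line according to whether `r² ≥ M r(j)²`. Far out, `r(j)² ≤ r²/M` gives
`α B₀ r²/2 = δ q₂ B₀ (r² - r²/M)/2 ≤ 2δρ(r,j)`; near the origin, `r² < M r(j)²` bounds the Gaussian
exponent by `α B₀ M r(j)²/2 = 2γ m_j` with `γ = δ q₂ (M - 1) B̃ / ((q₁² - q₂²) B₀)`; for `m_j < 0` the
weight `ρ` is the full Gaussian `q₂ B₀ r²/4` and `α ≤ δ q₂`. Hence `e^{αB₀r²/2} ≤ e^{2δρ} + e^{2γ|m_j|}`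
pointwise, and the two given sums dominate.
-/

open MeasureTheory Real

theorem Real.exp_le_exp_add_exp_of_le_or_le {x a b : ℝ} (h : x ≤ a ∨ x ≤ b) :
    exp x ≤ exp a + exp b := by
  rcases h with h | h
  · exact (exp_le_exp.2 h).trans (le_add_of_nonneg_right (exp_pos b).le)
  · exact (exp_le_exp.2 h).trans (le_add_of_nonneg_left (exp_pos a).le)

theorem ENNReal.ofReal_mul_le_add_of_le {a b c x : ℝ} (ha : 0 ≤ a) (h : a ≤ b + c) :
    ENNReal.ofReal (a * x) ≤ ENNReal.ofReal (b * x) + ENNReal.ofReal (c * x) := by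
  rcases le_total 0 x with hx | hx
  · calc ENNReal.ofReal (a * x) ≤ ENNReal.ofReal (b * x + c * x) :=
          ENNReal.ofReal_le_ofReal (by nlinarith)
      _ ≤ _ := ENNReal.ofReal_add_le
  · rw [ENNReal.ofReal_of_nonpos (mul_nonpos_of_nonneg_of_nonpos ha hx)]
    exact zero_le

theorem MeasureTheory.tsum_lintegral_lt_top_of_le_add {ι α : Type*} [MeasurableSpace α]
    {μ : Measure α} {f g h : ι → α → ENNReal} (hh : ∀ j, Measurable (h j))
    (hle : ∀ j, ∀ᵐ x ∂μ, f j x ≤ g j x + h j x)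
    (hg : ∑' j, ∫⁻ x, g j x ∂μ < ⊤) (hh_fin : ∑' j, ∫⁻ x, h j x ∂μ < ⊤) :
    ∑' j, ∫⁻ x, f j x ∂μ < ⊤ :=
  calc ∑' j, ∫⁻ x, f j x ∂μ ≤ ∑' j, (∫⁻ x, g j x ∂μ + ∫⁻ x, h j x ∂μ) :=
        ENNReal.tsum_le_tsum fun j =>
          (lintegral_mono_ae (hle j)).trans_eq (lintegral_add_right _ (hh j))
    _ = ∑' j, ∫⁻ x, g j x ∂μ + ∑' j, ∫⁻ x, h j x ∂μ := ENNReal.tsum_add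
    _ < ⊤ := ENNReal.add_lt_top.2 ⟨hg, hh_fin⟩

section GaussianExponent

variable {B₀ Bt D q₂ δ M m r R : ℝ}

theorem gaussian_exponent_le_agmon (hB₀ : 0 ≤ B₀) (hq₂ : 0 ≤ q₂) (hδ : 0 ≤ δ) (hM : 1 ≤ M)
    (hr : 0 ≤ r) (hR : M * R ^ 2 ≤ r ^ 2) :
    δ * q₂ * (1 - 1 / M) * B₀ * r ^ 2 / 2 ≤
      2 * δ * (if R ≤ r then q₂ * B₀ / 4 * (r ^ 2 - R ^ 2) else 0) := by
  have hRr : R ≤ r := abs_le_of_sq_le_sq' (by nlinarith) hr |>.2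
  have hR_le : R ^ 2 ≤ r ^ 2 / M := by rw [le_div_iff₀ (by linarith)]; linarith
  rw [if_pos hRr]
  have hgap : 2 * δ * (q₂ * B₀ / 4 * (r ^ 2 - R ^ 2)) - δ * q₂ * (1 - 1 / M) * B₀ * r ^ 2 / 2 =
      δ * q₂ * B₀ / 2 * (r ^ 2 / M - R ^ 2) := by ring
  have : 0 ≤ δ * q₂ * B₀ / 2 * (r ^ 2 / M - R ^ 2) :=
    mul_nonneg (by positivity) (sub_nonneg.2 hR_le)
  linarith

theorem gaussian_exponent_le_angular (hB₀ : 0 < B₀) (hD : 0 < D) (hq₂ : 0 ≤ q₂) (hδ : 0 ≤ δ)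
    (hM : 1 ≤ M) (hR_sq : R ^ 2 = 4 * Bt * m / (D * B₀ ^ 2)) (hR : r ^ 2 ≤ M * R ^ 2) :
    δ * q₂ * (1 - 1 / M) * B₀ * r ^ 2 / 2 ≤ 2 * (δ * q₂ * (M - 1) * Bt / (D * B₀)) * m := by
  have hα : 0 ≤ δ * q₂ * (1 - 1 / M) * B₀ / 2 := by
    have : 1 / M ≤ 1 := by rw [div_le_one (by linarith)]; exact hM
    have : 0 ≤ 1 - 1 / M := by linarith
    positivity
  calc δ * q₂ * (1 - 1 / M) * B₀ * r ^ 2 / 2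
      = δ * q₂ * (1 - 1 / M) * B₀ / 2 * r ^ 2 := by ring
    _ ≤ δ * q₂ * (1 - 1 / M) * B₀ / 2 * (M * R ^ 2) := mul_le_mul_of_nonneg_left hR hα
    _ = 2 * (δ * q₂ * (M - 1) * Bt / (D * B₀)) * m := by
        rw [hR_sq]; field_simp; ring

theorem gaussian_exponent_le_agmon_or_angular (hB₀ : 0 < B₀) (hD : 0 < D) (hq₂ : 0 ≤ q₂)
    (hδ : 0 ≤ δ) (hM : 1 ≤ M) (hr : 0 ≤ r) (hR_sq : R ^ 2 = 4 * Bt * m / (D * B₀ ^ 2)) :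
    δ * q₂ * (1 - 1 / M) * B₀ * r ^ 2 / 2 ≤
        2 * δ * (if R ≤ r then q₂ * B₀ / 4 * (r ^ 2 - R ^ 2) else 0) ∨
      δ * q₂ * (1 - 1 / M) * B₀ * r ^ 2 / 2 ≤ 2 * (δ * q₂ * (M - 1) * Bt / (D * B₀)) * m := by
  rcases le_total (M * R ^ 2) (r ^ 2) with hR | hR
  · exact .inl (gaussian_exponent_le_agmon hB₀.le hq₂ hδ hM hr hR)
  · exact .inr (gaussian_exponent_le_angular hB₀ hD hq₂ hδ hM hR_sq hR)

theorem gaussian_exponent_le_full_gaussian (hB₀ : 0 ≤ B₀) (hq₂ : 0 ≤ q₂) (hδ : 0 ≤ δ)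
    (hM : 0 < M) :
    δ * q₂ * (1 - 1 / M) * B₀ * r ^ 2 / 2 ≤ 2 * δ * (q₂ * B₀ * r ^ 2 / 4) := by
  have : 0 ≤ δ * q₂ * B₀ * r ^ 2 / M := by positivity
  have : δ * q₂ * (1 - 1 / M) * B₀ * r ^ 2 = δ * q₂ * B₀ * r ^ 2 - δ * q₂ * B₀ * r ^ 2 / M := by
    ring
  nlinarith

end GaussianExponent

theorem stmt_15_general (B₀ Bt q₁ q₂ : ℝ) (hB₀ : 0 < B₀) (hBt : B₀ < Bt)
    (hq₂ : 0 < q₂) (hq₁₂ : q₂ < q₁)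
    (m : ℤ → ℝ)
    (rr : ℤ → ℝ)
    (hrr : ∀ j : ℤ, rr j =
      if 0 ≤ m j then Real.sqrt (4 * Bt * m j / ((q₁ ^ 2 - q₂ ^ 2) * B₀ ^ 2)) else 0)
    (ρ : ℝ → ℤ → ℝ)
    (hρ : ∀ r : ℝ, ∀ j : ℤ, ρ r j =
      if 0 ≤ m j then
        (if rr j ≤ r then q₂ * B₀ / 4 * (r ^ 2 - rr j ^ 2) else 0)
      else q₂ * B₀ * r ^ 2 / 4)
    (δ M : ℝ) (hδ₀ : 0 < δ) (hM : 1 < M)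
    (α : ℝ) (hα : α = δ * q₂ * (1 - 1 / M))
    (F : ℝ → ℤ → ℝ) (hFmeas : ∀ j : ℤ, Measurable fun r => F r j)
    (h1 : (∑' j : ℤ, ∫⁻ r in Set.Ioi (0:ℝ),
      ENNReal.ofReal (Real.exp (2 * δ * ρ r j) * F r j)) < ⊤)
    (h2 : ∀ γ > 0, (∑' j : ℤ, ∫⁻ r in Set.Ioi (0:ℝ),
      ENNReal.ofReal (Real.exp (2 * γ * |m j|) * F r j)) < ⊤) :
    (∑' j : ℤ, ∫⁻ r in Set.Ioi (0:ℝ),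
      ENNReal.ofReal (Real.exp (α * B₀ * r ^ 2 / 2) * F r j)) < ⊤ := by
  subst hα
  have hD : 0 < q₁ ^ 2 - q₂ ^ 2 := by nlinarith
  have hBt₀ : 0 < Bt := hB₀.trans hBt
  have hγ : 0 < δ * q₂ * (M - 1) * Bt / ((q₁ ^ 2 - q₂ ^ 2) * B₀) := by
    have := sub_pos.2 hM
    positivity
  refine tsum_lintegral_lt_top_of_le_add (fun j => (measurable_const.mul (hFmeas j)).ennreal_ofReal)
    (fun j => ?_) h1 (h2 _ hγ)
  filter_upwards [ae_restrict_mem measurableSet_Ioi] with r (hr : 0 < r)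
  refine ENNReal.ofReal_mul_le_add_of_le (exp_pos _).le (exp_le_exp_add_exp_of_le_or_le ?_)
  rcases le_or_gt 0 (m j) with hmj | hmj
  · have hrr_sq : rr j ^ 2 = 4 * Bt * m j / ((q₁ ^ 2 - q₂ ^ 2) * B₀ ^ 2) := by
      rw [hrr, if_pos hmj, sq_sqrt (by positivity)]
    rw [hρ, if_pos hmj, abs_of_nonneg hmj]
    exact gaussian_exponent_le_agmon_or_angular hB₀ hD hq₂.le hδ₀.le hM.le hr.le hrr_sq
  · rw [hρ, if_neg hmj.not_ge]
    exact .inl (gaussian_exponent_le_full_gaussian hB₀.le hq₂.le hδ₀.le (one_pos.trans hM))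

/-- Combination step of the Gaussian-localization proof: if
`Σ_j ∫ e^{2δρ(r,j)} F(r,j) dr < ∞` and `Σ_j ∫ e^{2γ|m_j|} F(r,j) dr < ∞` for every `γ > 0`,
then `Σ_j ∫ e^{α B₀ r²/2} F(r,j) dr < ∞` with `α = δ q₂ (1 - 1/M)`. -/
theorem stmt_15 (B₀ Bt q₁ q₂ : ℝ) (hB₀ : 0 < B₀) (hBt : B₀ < Bt)
    (hq₂ : 0 < q₂) (hq₁₂ : q₂ < q₁) (hq₁ : q₁ < 1)
    (m : ℤ → ℝ) (hm : ∀ j : ℤ, m j = (2 * j + 1) / 2)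
    (rr : ℤ → ℝ)
    (hrr : ∀ j : ℤ, rr j =
      if 0 ≤ m j then Real.sqrt (4 * Bt * m j / ((q₁ ^ 2 - q₂ ^ 2) * B₀ ^ 2)) else 0)
    (ρ : ℝ → ℤ → ℝ)
    (hρ : ∀ r : ℝ, ∀ j : ℤ, ρ r j =
      if 0 ≤ m j then
        (if rr j ≤ r then q₂ * B₀ / 4 * (r ^ 2 - rr j ^ 2) else 0)
      else q₂ * B₀ * r ^ 2 / 4)
    (δ M : ℝ) (hδ₀ : 0 < δ) (hδ₁ : δ < 1) (hM : 1 < M)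
    (α : ℝ) (hα : α = δ * q₂ * (1 - 1 / M))
    (F : ℝ → ℤ → ℝ) (hFmeas : ∀ j : ℤ, Measurable fun r => F r j)
    (hFpos : ∀ r : ℝ, ∀ j : ℤ, 0 ≤ F r j)
    (h1 : (∑' j : ℤ, ∫⁻ r in Set.Ioi (0:ℝ),
      ENNReal.ofReal (Real.exp (2 * δ * ρ r j) * F r j)) < ⊤)
    (h2 : ∀ γ > 0, (∑' j : ℤ, ∫⁻ r in Set.Ioi (0:ℝ),
      ENNReal.ofReal (Real.exp (2 * γ * |m j|) * F r j)) < ⊤) :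
    (∑' j : ℤ, ∫⁻ r in Set.Ioi (0:ℝ),
      ENNReal.ofReal (Real.exp (α * B₀ * r ^ 2 / 2) * F r j)) < ⊤ :=
  stmt_15_general B₀ Bt q₁ q₂ hB₀ hBt hq₂ hq₁₂ m rr hrr ρ hρ δ M hδ₀ hM α hα F hFmeas h1 h2
end

section
/- Let 0 < q₂ < q₁ < 1, μ ∈ (0, 1), B̃ > B₀ > 0 and R > 0. Let A : (0, ∞) → ℝ be continuously differentiable with q₁ B₀ r / 2 ≤ A(r) ≤ B̃ r / 2 and |A′(r)| ≤ B̃ for all r ≥ R. Let m ∈ ℝ, σ ∈ {+1, −1}, and let g : (0, ∞) → ℂ be smooth with compact support contained in (R, ∞); assume moreover that either m < 0, or else 4 B̃ m ≤ (q₁² − μ² q₂²) B₀² r² for every r in the support of g. Then ∫₀^∞ |σ g′(r) + (A(r) − m/r) g(r)|² dr ≥ ∫₀^∞ ( μ² q₂² B₀² r² / 4 − 1/(4r²) − B̃ ) |g(r)|² dr. -/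
open MeasureTheory

private lemma normsq_eq (z : ℂ) : ‖z‖^2 = z.re^2 + z.im^2 := by
  rw [Complex.sq_norm, Complex.normSq_apply]; ring

private lemma cont_and_int {K : Set ℝ} (hK : IsCompact K) (hK0 : K ⊆ Set.Ioi 0)
    (f : ℝ → ℝ) (hf : ContinuousOn f (Set.Ioi 0)) (h0 : ∀ r ∉ K, f r = 0) :
    IntegrableOn f (Set.Ioi 0) := by
  have hc : Continuous f := by
    rw [continuous_iff_continuousAt]
    intro x
    by_cases hx : x ∈ Set.Ioi 0
    · exact hf.continuousAt (isOpen_Ioi.mem_nhds hx)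
    · have hxK : x ∉ K := fun h => hx (hK0 h)
      have : f =ᶠ[nhds x] (fun _ => 0) := by
        filter_upwards [hK.isClosed.isOpen_compl.mem_nhds hxK] with y hy
        exact h0 y hy
      exact ContinuousAt.congr continuousAt_const this.symm
  have hcs : HasCompactSupport f := HasCompactSupport.intro hK h0
  exact (hc.integrable_of_hasCompactSupport hcs).integrableOn


set_option maxHeartbeats 1000000 in
private lemma scalar_bound (B₀ Bt q₁ q₂ μ a d m σ r : ℝ)
    (hB₀ : 0 < B₀) (hq₂ : 0 < q₂) (hq₁₂ : q₂ < q₁) (hμ₀ : 0 < μ) (hμ₁ : μ < 1)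
    (hr : 0 < r) (hAl : q₁ * B₀ * r / 2 ≤ a) (hAu : a ≤ Bt * r / 2) (hd : |d| ≤ Bt)
    (hσabs : |σ| = 1)
    (hm : m ≤ 0 ∨ 4 * Bt * m ≤ (q₁ ^ 2 - μ ^ 2 * q₂ ^ 2) * B₀ ^ 2 * r ^ 2) :
    μ ^ 2 * q₂ ^ 2 * B₀ ^ 2 * r ^ 2 / 4 - 1 / (4 * r ^ 2) - Bt
      ≤ (a - m / r) ^ 2 - σ * (d + m / r ^ 2) := by
  have hr2 : (0:ℝ) < r ^ 2 := by positivity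
  have hrne : r ≠ 0 := hr.ne'
  have hq₁pos : (0:ℝ) < q₁ := hq₂.trans hq₁₂
  have hapos : 0 ≤ a := le_trans (by positivity) hAl
  have hs1 : σ * (d + m / r ^ 2) ≤ Bt + |m| / r ^ 2 := by
    calc σ * (d + m / r ^ 2) ≤ |σ * (d + m / r ^ 2)| := le_abs_self _
      _ = |d + m / r ^ 2| := by rw [abs_mul, hσabs, one_mul]
      _ ≤ |d| + |m / r ^ 2| := abs_add_le _ _
      _ = |d| + |m| / r ^ 2 := by rw [abs_div, abs_of_pos hr2]
      _ ≤ Bt + |m| / r ^ 2 := add_le_add hd le_rfl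
  have hs2 : -(1 / (4 * r ^ 2)) ≤ m ^ 2 / r ^ 2 - |m| / r ^ 2 := by
    have e1 : m ^ 2 / r ^ 2 - |m| / r ^ 2 = (m ^ 2 - |m|) / r ^ 2 := by ring
    have e : -(1 / (4 * r ^ 2)) = (-(1/4)) / r ^ 2 := by
      rw [neg_div, div_div]
    rw [e1, e, div_le_div_iff_of_pos_right hr2]
    nlinarith [sq_nonneg (|m| - 1/2), sq_abs m]
  have hs3 : μ ^ 2 * q₂ ^ 2 * B₀ ^ 2 * r ^ 2 / 4 ≤ a ^ 2 - 2 * a * (m / r) := by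
    rcases le_or_gt m 0 with hm0 | hm0
    · have h1 : 0 ≤ (-m) / r := div_nonneg (by linarith) hr.le
      have hmr : 0 ≤ -(2 * a * (m / r)) := by
        have : -(2 * a * (m / r)) = 2 * a * ((-m) / r) := by ring
        rw [this]; positivity
      have hμq : μ * q₂ ≤ q₁ := by nlinarith
      have hc : μ * q₂ * B₀ * r / 2 ≤ a := by nlinarith [mul_pos hB₀ hr]
      have hb : (0:ℝ) ≤ μ * q₂ * B₀ * r / 2 := by positivity
      nlinarith [mul_le_mul hc hc hb (hb.trans hc)]
    · have hKm : 4 * Bt * m ≤ (q₁ ^ 2 - μ ^ 2 * q₂ ^ 2) * B₀ ^ 2 * r ^ 2 := by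
        rcases hm with h | h
        · linarith
        · exact h
      have h2am : 2 * a * (m / r) ≤ Bt * m := by
        rw [show 2 * a * (m / r) = 2 * a * m / r by ring, div_le_iff₀ hr]
        nlinarith
      nlinarith [mul_le_mul hAl hAl (by positivity) hapos, h2am, hKm]
  have hexp : (a - m / r) ^ 2 = a ^ 2 - 2 * a * (m / r) + m ^ 2 / r ^ 2 := by
    rw [sub_sq, div_pow]
  rw [hexp]
  linarith [hs1, hs2, hs3]

/-- Per-angular-momentum-mode lower bound for the radial Dirac operator (Lemma
LowerboundK02): under the vector-potential bounds and the support condition on `g`,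
`∫ |σg' + (A - m/r)g|² ≥ ∫ (μ²q₂²B₀²r²/4 - 1/(4r²) - B̃) |g|²`. -/
theorem stmt_17 (B₀ Bt q₁ q₂ μ R : ℝ) (hB₀ : 0 < B₀) (hBt : B₀ < Bt)
    (hq₂ : 0 < q₂) (hq₁₂ : q₂ < q₁) (hq₁ : q₁ < 1) (hμ₀ : 0 < μ) (hμ₁ : μ < 1) (hR : 0 < R)
    (A : ℝ → ℝ) (hA : ContDiffOn ℝ 1 A (Set.Ioi 0))
    (hAlow : ∀ r ≥ R, q₁ * B₀ * r / 2 ≤ A r)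
    (hAup : ∀ r ≥ R, A r ≤ Bt * r / 2)
    (hA' : ∀ r ≥ R, |deriv A r| ≤ Bt)
    (m σ : ℝ) (hσ : σ = 1 ∨ σ = -1)
    (g : ℝ → ℂ) (hg : ContDiff ℝ (⊤ : ℕ∞) g) (hgc : HasCompactSupport g)
    (hgs : tsupport g ⊆ Set.Ioi R)
    (hm : m < 0 ∨ ∀ r ∈ tsupport g, 4 * Bt * m ≤ (q₁ ^ 2 - μ ^ 2 * q₂ ^ 2) * B₀ ^ 2 * r ^ 2) :
    (∫ r in Set.Ioi (0:ℝ),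
        (μ ^ 2 * q₂ ^ 2 * B₀ ^ 2 * r ^ 2 / 4 - 1 / (4 * r ^ 2) - Bt) * ‖g r‖ ^ 2)
      ≤ ∫ r in Set.Ioi (0:ℝ),
        ‖(σ : ℂ) * deriv g r + ((A r - m / r : ℝ) : ℂ) * g r‖ ^ 2 := by
  set K := tsupport g with hKdef
  have hKc : IsCompact K := hgc
  have hK0 : K ⊆ Set.Ioi 0 := hgs.trans (Set.Ioi_subset_Ioi hR.le)
  have hσ2 : σ^2 = 1 := by rcases hσ with h | h <;> rw [h] <;> norm_num
  have hσabs : |σ| = 1 := by rcases hσ with h | h <;> rw [h] <;> norm_num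
  have hgd : Differentiable ℝ g := hg.differentiable (by simp)
  have hg'c : Continuous (deriv g) := hg.continuous_deriv (by simp)
  have hg0 : ∀ r ∉ K, g r = 0 := fun r hr => image_eq_zero_of_notMem_tsupport hr
  have hg'0 : ∀ r ∉ K, deriv g r = 0 := by
    intro r hr
    have h : g =ᶠ[nhds r] (fun _ => 0) := by
      filter_upwards [(isClosed_tsupport g).isOpen_compl.mem_nhds hr] with x hx
      exact image_eq_zero_of_notMem_tsupport hx
    rw [h.deriv_eq, deriv_const]
  -- definitions
  set w : ℝ → ℝ := fun r => A r - m / r with hw_def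
  set w' : ℝ → ℝ := fun r => deriv A r + m / r^2 with hw'_def
  set n : ℝ → ℝ := fun r => ‖g r‖^2 with hn_def
  set n' : ℝ → ℝ := fun r => 2 * ((g r).re * (deriv g r).re + (g r).im * (deriv g r).im)
    with hn'_def
  have hn0 : ∀ r ∉ K, n r = 0 := fun r hr => by simp [hn_def, hg0 r hr]
  have hn'0 : ∀ r ∉ K, n' r = 0 := fun r hr => by simp [hn'_def, hg0 r hr, hg'0 r hr]
  have hnnonneg : ∀ r, 0 ≤ n r := fun r => by positivity
  -- derivative facts
  have hwd : ∀ r ∈ Set.Ioi (0:ℝ), HasDerivAt w (w' r) r := by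
    intro r hr
    have hr0 : (r:ℝ) ≠ 0 := ne_of_gt hr
    have hAd : HasDerivAt A (deriv A r) r :=
      ((hA.differentiableOn one_ne_zero).differentiableAt (isOpen_Ioi.mem_nhds hr)).hasDerivAt
    have hinv : HasDerivAt (fun x : ℝ => m / x) (-(m / r^2)) r := by
      simpa [div_eq_mul_inv, neg_mul, mul_comm] using (hasDerivAt_inv hr0).const_mul m
    have := hAd.sub hinv
    exact this.congr_deriv (sub_neg_eq_add _ _)
  have hnd : ∀ r, HasDerivAt n (n' r) r := by
    intro r
    have hgr : HasDerivAt g (deriv g r) r := (hgd r).hasDerivAt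
    have hre : HasDerivAt (fun x => (g x).re) (deriv g r).re r :=
      Complex.reCLM.hasFDerivAt.comp_hasDerivAt r hgr
    have him : HasDerivAt (fun x => (g x).im) (deriv g r).im r :=
      Complex.imCLM.hasFDerivAt.comp_hasDerivAt r hgr
    have h : HasDerivAt (fun x => (g x).re * (g x).re + (g x).im * (g x).im)
        (2 * ((g r).re * (deriv g r).re + (g r).im * (deriv g r).im)) r := by
      have h1 := (hre.mul hre).add (him.mul him)
      exact h1.congr_deriv (by ring)
    have heq : n = fun x => (g x).re * (g x).re + (g x).im * (g x).im := by
      funext x; show ‖g x‖^2 = _; rw [normsq_eq]; ring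
    rw [heq]; exact h
  -- main functions
  set h : ℝ → ℝ := fun r => ‖deriv g r‖^2 + ((w r)^2 - σ * w' r) * n r with hh_def
  set φ : ℝ → ℝ := fun r => σ * (w r * n r) with hφ_def
  set φd : ℝ → ℝ := fun r => σ * (w' r * n r + w r * n' r) with hφd_def
  set Fn : ℝ → ℝ := fun r =>
    (μ ^ 2 * q₂ ^ 2 * B₀ ^ 2 * r ^ 2 / 4 - 1 / (4 * r ^ 2) - Bt) * ‖g r‖ ^ 2 with hFn_def
  -- pointwise identity
  have hkey : ∀ r ∈ Set.Ioi (0:ℝ),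
      ‖(σ : ℂ) * deriv g r + ((A r - m / r : ℝ) : ℂ) * g r‖ ^ 2 = h r + φd r := by
    intro r hr
    have hexp : ∀ (a b : ℝ) (u v : ℂ),
        ‖(a:ℂ)*v + (b:ℂ)*u‖^2
          = a^2*‖v‖^2 + b^2*‖u‖^2 + 2*a*b*(u.re*v.re + u.im*v.im) := by
      intro a b u v
      simp only [normsq_eq, Complex.add_re, Complex.add_im, Complex.mul_re, Complex.mul_im,
        Complex.ofReal_re, Complex.ofReal_im]
      ring
    have := hexp σ (w r) (g r) (deriv g r)
    rw [hw_def] at this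
    simp only [hh_def, hφd_def, hn_def, hn'_def, hw_def]
    rw [this]
    have : σ^2 * ‖deriv g r‖^2 = ‖deriv g r‖^2 := by rw [hσ2]; ring
    nlinarith [hσ2]
  -- continuity on Ioi 0
  have hwcont : ContinuousOn w (Set.Ioi 0) := by
    apply (hA.continuousOn).sub
    exact continuousOn_const.div continuousOn_id (fun r hr => ne_of_gt hr)
  have hw'cont : ContinuousOn w' (Set.Ioi 0) := by
    apply (hA.continuousOn_deriv_of_isOpen isOpen_Ioi le_rfl).add
    exact continuousOn_const.div (continuousOn_pow 2)
      (fun r hr => ne_of_gt (pow_pos hr 2))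
  have hncont : Continuous n := by
    have : Continuous fun r => ‖g r‖ := hg.continuous.norm
    exact this.pow 2
  have hn'cont : Continuous n' := by
    apply continuous_const.mul
    apply Continuous.add
    · exact (Complex.continuous_re.comp hg.continuous).mul
        (Complex.continuous_re.comp hg'c)
    · exact (Complex.continuous_im.comp hg.continuous).mul
        (Complex.continuous_im.comp hg'c)
  -- integrability
  have hInth : IntegrableOn h (Set.Ioi 0) := by
    apply cont_and_int hKc hK0
    · apply ContinuousOn.add
      · exact ((hg'c.norm).pow 2).continuousOn
      · exact ((hwcont.pow 2).sub (continuousOn_const.mul hw'cont)).mul hncont.continuousOn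
    · intro r hr; simp [hh_def, hg'0 r hr, hn0 r hr]
  have hIntφd : IntegrableOn φd (Set.Ioi 0) := by
    apply cont_and_int hKc hK0
    · exact continuousOn_const.mul ((hw'cont.mul hncont.continuousOn).add
        (hwcont.mul hn'cont.continuousOn))
    · intro r hr; simp [hφd_def, hn0 r hr, hn'0 r hr]
  have hIntFn : IntegrableOn Fn (Set.Ioi 0) := by
    apply cont_and_int hKc hK0
    · apply ContinuousOn.mul
      · apply ContinuousOn.sub
        apply ContinuousOn.sub
        · exact (continuousOn_const.mul (continuousOn_pow 2)).div continuousOn_const (by norm_num)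
        · exact continuousOn_const.div (continuousOn_const.mul (continuousOn_pow 2))
            (fun r hr => ne_of_gt (by have h0 : (0:ℝ) < r := hr; nlinarith))
        · exact continuousOn_const
      · exact (hncont.continuousOn)
    · intro r hr; simp [hFn_def, hg0 r hr]
  -- integral of φd is zero
  have hφint : ∫ r in Set.Ioi (0:ℝ), φd r = 0 := by
    have hφd' : ∀ r ∈ Set.Ioi (0:ℝ), HasDerivAt φ (φd r) r := by
      intro r hr
      exact ((hwd r hr).mul (hnd r)).const_mul σ
    have hφ0 : ∀ r ∉ K, φ r = 0 := fun r hr => by simp [hφ_def, hn0 r hr]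
    have hφcont : ContinuousWithinAt φ (Set.Ici 0) 0 := by
      have h0K : (0:ℝ) ∉ K := fun h => absurd (hK0 h) (by simp)
      have : φ =ᶠ[nhds 0] (fun _ => 0) := by
        filter_upwards [hKc.isClosed.isOpen_compl.mem_nhds h0K] with y hy
        exact hφ0 y hy
      exact (ContinuousAt.congr continuousAt_const this.symm).continuousWithinAt
    have hφtop : Filter.Tendsto φ Filter.atTop (nhds 0) := by
      obtain ⟨C, hC⟩ := hKc.bddAbove
      apply Filter.Tendsto.congr' _ tendsto_const_nhds
      filter_upwards [Filter.eventually_ge_atTop (C+1)] with x hx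
      refine (hφ0 x fun hxK => ?_).symm
      have := hC hxK; linarith
    have := integral_Ioi_of_hasDerivAt_of_tendsto hφcont hφd' hIntφd hφtop
    rw [this]
    have h0K : (0:ℝ) ∉ K := fun h => absurd (hK0 h) (by simp)
    simp [hφ0 0 h0K]
  -- rewrite RHS
  have hR1 : (∫ r in Set.Ioi (0:ℝ),
      ‖(σ : ℂ) * deriv g r + ((A r - m / r : ℝ) : ℂ) * g r‖ ^ 2)
      = (∫ r in Set.Ioi (0:ℝ), h r) := by
    rw [setIntegral_congr_fun measurableSet_Ioi hkey, integral_add hInth hIntφd, hφint, add_zero]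
  rw [hR1]
  -- pointwise inequality and monotonicity
  apply setIntegral_mono_on hIntFn hInth measurableSet_Ioi
  intro r hr
  by_cases hrK : r ∈ K
  · -- scalar bound
    have hrR : R < r := hgs hrK
    have hr0 : (0:ℝ) < r := hr
    have hAl := hAlow r hrR.le
    have hAu := hAup r hrR.le
    have hA'r := hA' r hrR.le
    have hscal : μ ^ 2 * q₂ ^ 2 * B₀ ^ 2 * r ^ 2 / 4 - 1 / (4 * r ^ 2) - Bt
        ≤ (w r)^2 - σ * w' r := by
      apply scalar_bound B₀ Bt q₁ q₂ μ (A r) (deriv A r) m σ r hB₀ hq₂ hq₁₂ hμ₀ hμ₁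
        hr0 hAl hAu hA'r hσabs
      rcases hm with hc | hc
      · exact Or.inl hc.le
      · exact Or.inr (hc r hrK)
    have h1 : Fn r = (μ ^ 2 * q₂ ^ 2 * B₀ ^ 2 * r ^ 2 / 4 - 1 / (4 * r ^ 2) - Bt) * n r := rfl
    have h2 : (μ ^ 2 * q₂ ^ 2 * B₀ ^ 2 * r ^ 2 / 4 - 1 / (4 * r ^ 2) - Bt) * n r
        ≤ ((w r)^2 - σ * w' r) * n r := mul_le_mul_of_nonneg_right hscal (hnnonneg r)
    have h3 : (0:ℝ) ≤ ‖deriv g r‖^2 := by positivity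
    simp only [hh_def]; rw [h1]; linarith
  · have e1 : Fn r = 0 := by simp [hFn_def, hg0 r hrK]
    have e2 : h r = 0 := by simp [hh_def, hg'0 r hrK, hn0 r hrK]
    rw [e1, e2]
end
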